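/- There exist a constant a > 0 and a non-decreasing function d : ℕ × ℕ → ℕ with d(ℓ,n) ≤ a·ℓ·log₂(n+1) for all ℓ, n ≥ 1, such that every finite simple graph G on n vertices has, for every integer ℓ ≥ 1, a balanced separator of order at most n/ℓ + d(ℓ,n)·ω_{d(ℓ,n)}(G)². -/

import Mathlib

open scoped Classical

universe u

/-- `C` is a balanced separator in `G`: every connected component of `G - C`
has at most `(2/3)|V(G)|` vertices. -/
def IsBalancedSeparator {V : Type u} (G : SimpleGraph V) (C : Set V) : Prop :=
  ∀ K : (G.induce Cᶜ).ConnectedComponent, 3 * K.supp.ncard ≤ 2 * Nat.card V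

/-- A model of the clique `K_m` of depth `d` in `G`. -/
structure CliqueModel {V : Type u} (G : SimpleGraph V) (m d : ℕ) where
  B : Fin m → Set V
  disj : ∀ i j : Fin m, i ≠ j → Disjoint (B i) (B j)
  conn : ∀ i, (G.induce (B i)).Connected
  rad : ∀ i, ∃ v : B i, ∀ u : B i, (G.induce (B i)).dist v u ≤ d
  adj : ∀ i j : Fin m, i < j → ∃ u ∈ B i, ∃ v ∈ B j, G.Adj u v

/-- The support of a clique model. -/
def CliqueModel.support {V : Type u} {G : SimpleGraph V} {m d : ℕ}
    (M : CliqueModel G m d) : Set V := ⋃ i, M.B i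

/-- An `m₀`-bounded model: each branch set has at most `m₀ * d` vertices. -/
def CliqueModel.Bounded {V : Type u} {G : SimpleGraph V} {m d : ℕ}
    (M : CliqueModel G m d) (m₀ : ℕ) : Prop := ∀ i, (M.B i).ncard ≤ m₀ * d

/-- `ω_d(G)`: the maximum `m` such that `G` contains a model of `K_m` of depth `d`. -/
noncomputable def omegaDepth {V : Type u} (G : SimpleGraph V) (d : ℕ) : ℕ :=
  sSup {m | Nonempty (CliqueModel G m d)}

/-- Membership in the class `𝒢_{c,ε}`: every subgraph `H` of `G` has a
balanced separator of order at most `c * |V(H)|^(1-ε)`. -/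
def MemGSep {V : Type u} (G : SimpleGraph V) (c ε : ℝ) : Prop :=
  ∀ (S : Set V) (H : SimpleGraph S), H ≤ G.induce S →
    ∃ C : Set S, IsBalancedSeparator H C ∧ (C.ncard : ℝ) ≤ c * (S.ncard : ℝ) ^ (1 - ε)

/-- A model of a graph `H` of depth `r` in `G` (witnessing that `H` is obtained from a
subgraph of `G` by contracting vertex-disjoint subgraphs of radius at most `r`). -/
structure MinorModel {V : Type u} {W : Type w} (G : SimpleGraph V) (H : SimpleGraph W)
    (r : ℕ) where
  B : W → Set V
  disj : ∀ i j : W, i ≠ j → Disjoint (B i) (B j)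
  conn : ∀ i, (G.induce (B i)).Connected
  rad : ∀ i, ∃ v : B i, ∀ u : B i, (G.induce (B i)).dist v u ≤ r
  adj : ∀ i j : W, H.Adj i j → ∃ u ∈ B i, ∃ v ∈ B j, G.Adj u v

/-- `∇_r(G)`: the maximum average degree of a graph obtained from a subgraph of `G`
by contracting vertex-disjoint subgraphs of radius at most `r`. -/
noncomputable def nabla {V : Type u} (G : SimpleGraph V) (r : ℕ) : ℝ :=
  sSup { x | ∃ (m : ℕ) (H : SimpleGraph (Fin m)), 0 < m ∧ Nonempty (MinorModel G H r) ∧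
    x = 2 * (H.edgeSet.ncard : ℝ) / m }

/-- A tree decomposition of `G`. -/
structure TreeDecomp {V : Type u} (G : SimpleGraph V) where
  ι : Type u
  T : SimpleGraph ι
  tree : T.IsTree
  bag : ι → Set V
  hedge : ∀ u v : V, G.Adj u v → ∃ z, u ∈ bag z ∧ v ∈ bag z
  hvert : ∀ v : V, (T.induce {z | v ∈ bag z}).Connected

/-- `G` has treewidth at most `k`. -/
def TreewidthLE {V : Type u} (G : SimpleGraph V) (k : ℕ) : Prop :=
  ∃ D : TreeDecomp G, ∀ z, (D.bag z).ncard ≤ k + 1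

/-- `coTW_k(G)`: sets of vertices whose removal brings the treewidth down to at most `k`. -/
def coTW {V : Type u} (G : SimpleGraph V) (k : ℕ) : Set (Set V) :=
  { X | TreewidthLE (G.induce Xᶜ) k }

/-- An `ε`-thin (finitely supported) probability distribution on a collection `𝒳`
of subsets of the vertex set. -/
structure ThinDist {V : Type u} (𝒳 : Set (Set V)) (ε : ℝ) where
  supp : Finset (Set V)
  p : Set V → ℝ
  nonneg : ∀ X, 0 ≤ p X
  mem : ∀ X ∈ supp, X ∈ 𝒳
  zero_outside : ∀ X ∉ supp, p X = 0
  total : ∑ X ∈ supp, p X = 1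
  thin : ∀ v : V, ∑ X ∈ supp, (if v ∈ X then p X else 0) ≤ ε

/-!
The separator is built by the Plotkin–Rao–Smith procedure. We keep a set `S` of deleted BFS
layers and a family `M` of pairwise disjoint, pairwise adjacent branch sets of radius at most `d`
and of at most `d·ω_d(G)` vertices each, and let `R` be the rest of the graph. While `G[R]` has a
component `K` with more than `2n/3` vertices, pick `v ∈ K`.

If `K` lies within distance `d` of `v`, discard the branch sets with no neighbour in `K` (then `K`
is still a component) and add as a new branch set the union of paths of length at most `d` from
`v` to a neighbour of each remaining one. The enlarged family is again a clique model, so at most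
`ω_d(G) - 1` sets remained, which bounds the size of the new one.

Otherwise some BFS layer `L` around `v` in `K` has `ℓ|L|` at most the size of the ball inside it
and at most the size of the part of `K` outside it: if not, the ball sizes `b_r` and the sizes
`c_r` of their complements in `K` satisfy `(ℓ+1) b_r c_(r+1) ≤ ℓ b_(r+1) c_r` for `r < d`, which
telescopes to `(1 + 1/ℓ)^d ≤ n²`, impossible for `d = 2ℓ⌈log₂(n+1)⌉`. Deleting `L` leaves each
large component on one side of `L`, with at least `ℓ|L|` vertices fewer than `K`.

So the size of the large component decreases, while `ℓ|S|` plus that size stays at most `n`; at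
the end `S ∪ ⋃ M` is a balanced separator with at most `n/ℓ + d·ω_d(G)²` vertices.
-/

lemma inter_nonempty_of_card_lt_ncard_add_ncard {V : Type*} [Finite V] {X Y : Set V}
    (h : Nat.card V < X.ncard + Y.ncard) : (X ∩ Y).Nonempty := by
  rw [← Set.ncard_pos, ← Nat.add_lt_add_iff_right (k := (X ∪ Y).ncard),
    Set.ncard_inter_add_ncard_union]
  have := Set.ncard_le_card (X ∪ Y)
  omega

lemma ncard_sUnion_le_card_mul {V : Type*} {M : Finset (Set V)} {c : ℕ}
    (h : ∀ B ∈ M, B.ncard ≤ c) : (⋃₀ (M : Set (Set V))).ncard ≤ M.card * c := by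
  rw [Set.sUnion_eq_biUnion]
  simpa using (M.set_ncard_biUnion_le id).trans (Finset.sum_le_card_nsmul M _ c h)

lemma pow_mul_mul_le_of_forall_lt_mul {ℓ d : ℕ} {b c L : ℕ → ℕ} (hb : ∀ r, 0 < b r)
    (hbL : ∀ r, b (r + 1) = b r + L r) (hcL : ∀ r, c r = c (r + 1) + L r)
    (h : ∀ r < d, b r < ℓ * L r ∨ c (r + 1) < ℓ * L r) :
    (ℓ + 1) ^ d * b 0 * c d ≤ ℓ ^ d * b d * c 0 := by
  induction d with
  | zero => simp
  | succ d ih =>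
    have step : (ℓ + 1) * b d * c (d + 1) ≤ ℓ * b (d + 1) * c d := by
      rw [hbL, hcL d]
      rcases h d (by omega) with h' | h' <;> nlinarith
    refine Nat.le_of_mul_le_mul_right ?_ (hb d)
    calc (ℓ + 1) ^ (d + 1) * b 0 * c (d + 1) * b d
        = (ℓ + 1) ^ d * b 0 * ((ℓ + 1) * b d * c (d + 1)) := by ring
      _ ≤ (ℓ + 1) ^ d * b 0 * (ℓ * b (d + 1) * c d) := by gcongr
      _ = ℓ * b (d + 1) * ((ℓ + 1) ^ d * b 0 * c d) := by ring
      _ ≤ ℓ * b (d + 1) * (ℓ ^ d * b d * c 0) :=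
        Nat.mul_le_mul_left _ (ih fun r hr => h r (by omega))
      _ = ℓ ^ (d + 1) * b (d + 1) * c 0 * b d := by ring

namespace SimpleGraph

variable {V : Type*} (G : SimpleGraph V)

def compIn (A : Set V) (v : V) : Set V :=
  {u | ∃ w : G.Walk v u, ∀ x ∈ w.support, x ∈ A}

def ballIn (A : Set V) (v : V) (r : ℕ) : Set V :=
  {u | ∃ w : G.Walk v u, (∀ x ∈ w.support, x ∈ A) ∧ w.length ≤ r}

def layerIn (A : Set V) (v : V) (r : ℕ) : Set V :=
  G.ballIn A v (r + 1) \ G.ballIn A v r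

def AdjClosedIn (A P : Set V) : Prop :=
  ∀ x ∈ P, ∀ y ∈ A, G.Adj x y → y ∈ P

variable {G} {A A' P R K : Set V} {u v x y : V} {d ℓ r s : ℕ}

lemma AdjClosedIn.mono (hP : G.AdjClosedIn A P) (hA : A' ⊆ A) : G.AdjClosedIn A' P :=
  fun x hx y hy => hP x hx y (hA hy)

lemma compIn_subset_of_adjClosedIn (hP : G.AdjClosedIn A P) (hv : v ∈ P) :
    G.compIn A v ⊆ P := by
  rintro u ⟨w, hw⟩
  induction w with
  | nil => exact hv
  | cons h w ih =>
    exact ih (hP _ hv _ (hw _ (by simp)) h) fun x hx => hw x (by simp [hx])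

lemma mem_compIn_self (hv : v ∈ A) : v ∈ G.compIn A v :=
  ⟨.nil, by simpa⟩

lemma compIn_subset : G.compIn A v ⊆ A :=
  fun _ ⟨w, hw⟩ => hw _ w.end_mem_support

lemma adjClosedIn_compIn : G.AdjClosedIn A (G.compIn A v) := by
  rintro x ⟨w, hw⟩ y hy h
  refine ⟨w.concat h, fun z hz => ?_⟩
  rw [Walk.support_concat, List.mem_append, List.mem_singleton] at hz
  exact hz.elim (hw z) fun hz => hz ▸ hy

lemma mem_compIn_comm : u ∈ G.compIn A v ↔ v ∈ G.compIn A u := by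
  constructor <;> exact fun ⟨w, hw⟩ => ⟨w.reverse, by simpa using hw⟩

lemma compIn_eq_of_mem (hu : u ∈ G.compIn A v) : G.compIn A u = G.compIn A v :=
  (compIn_subset_of_adjClosedIn adjClosedIn_compIn hu).antisymm
    (compIn_subset_of_adjClosedIn adjClosedIn_compIn (mem_compIn_comm.1 hu))

lemma mem_compIn_of_reachable {u w : A} (h : (G.induce A).Reachable u w) :
    (w : V) ∈ G.compIn A u := by
  obtain ⟨p⟩ := h
  have hp : ∀ x ∈ (p.map (Embedding.induce A).toHom).support, x ∈ A := by
    rw [Walk.support_map, List.forall_mem_map]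
    exact fun a _ => a.2
  exact ⟨_, hp⟩

lemma mem_ballIn_self (hv : v ∈ A) : v ∈ G.ballIn A v r :=
  ⟨.nil, by simpa, by simp⟩

lemma ballIn_subset : G.ballIn A v r ⊆ A :=
  fun _ ⟨w, hw, _⟩ => hw _ w.end_mem_support

lemma ballIn_mono (hA : A ⊆ A') (hr : r ≤ s) : G.ballIn A v r ⊆ G.ballIn A' v s :=
  fun _ ⟨w, hw, hl⟩ => ⟨w, fun x hx => hA (hw x hx), hl.trans hr⟩

lemma mem_ballIn_of_mem_support (w : G.Walk v u) (hw : ∀ x ∈ w.support, x ∈ A)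
    (hl : w.length ≤ r) (hx : x ∈ w.support) : x ∈ G.ballIn A v r :=
  ⟨w.takeUntil x hx, fun y hy => hw y (w.support_takeUntil_subset_support hx hy),
    (w.length_takeUntil_le_length hx).trans hl⟩

lemma mem_ballIn_succ_of_adj (hx : x ∈ G.ballIn A v r) (hy : y ∈ A) (h : G.Adj x y) :
    y ∈ G.ballIn A v (r + 1) := by
  obtain ⟨w, hw, hl⟩ := hx
  refine ⟨w.concat h, fun z hz => ?_, by simpa using hl⟩
  rw [Walk.support_concat, List.mem_append, List.mem_singleton] at hz
  exact hz.elim (hw z) fun hz => hz ▸ hy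

lemma compIn_subset_ballIn_of_layerIn_eq_empty (hv : v ∈ A) (hK : G.AdjClosedIn A' A)
    (h : G.layerIn A v r = ∅) : G.compIn A' v ⊆ G.ballIn A v r := by
  refine compIn_subset_of_adjClosedIn (fun x hx y hy hxy => ?_) (mem_ballIn_self hv)
  have hy' := mem_ballIn_succ_of_adj hx (hK x (ballIn_subset hx) y hy hxy) hxy
  by_contra hyr
  exact h.subset ⟨hy', hyr⟩

lemma induce_connected_of_subset_ballIn {B : Set V} (hv : v ∈ B)
    (hB : B ⊆ G.ballIn B v d) : (G.induce B).Connected := by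
  rw [connected_iff_exists_forall_reachable]
  refine ⟨⟨v, hv⟩, fun u => ?_⟩
  obtain ⟨w, hw, -⟩ := hB u.2
  exact ⟨w.induce B hw⟩

lemma induce_dist_le_of_mem_ballIn {B : Set V} (hv : v ∈ B) (u : B)
    (hu : (u : V) ∈ G.ballIn B v d) : (G.induce B).dist ⟨v, hv⟩ u ≤ d := by
  obtain ⟨w, hw, hl⟩ := hu
  have hlen := congrArg Walk.length (w.map_induce hw)
  rw [Walk.length_map] at hlen
  exact (dist_le (w.induce B hw)).trans (hlen ▸ hl)

lemma compIn_subset_of_card_lt [Finite V] (hK : G.AdjClosedIn A K) (hR : R ⊆ A)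
    (h : Nat.card V < K.ncard + (G.compIn R x).ncard) : G.compIn R x ⊆ K := by
  obtain ⟨z, hzK, hz⟩ := inter_nonempty_of_card_lt_ncard_add_ncard h
  rw [← compIn_eq_of_mem hz]
  exact compIn_subset_of_adjClosedIn (hK.mono hR) hzK

lemma exists_centered_subset_adj [Finite V] (hv : v ∈ A) (M : Finset (Set V))
    (hM : ∀ B ∈ M, ∃ x ∈ B, ∃ y ∈ G.ballIn A v d, G.Adj x y) :
    ∃ B₀ ⊆ A, v ∈ B₀ ∧ B₀ ⊆ G.ballIn B₀ v d ∧ (∀ B ∈ M, ∃ x ∈ B, ∃ y ∈ B₀, G.Adj x y) ∧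
      B₀.ncard ≤ M.card * d + 1 := by
  induction M using Finset.induction_on with
  | empty =>
    exact ⟨{v}, by simpa, rfl, by simpa using mem_ballIn_self (Set.mem_singleton v), by simp,
      by simp⟩
  | insert B M hB ih =>
    obtain ⟨B₀, hB₀A, hvB₀, hB₀, hadj, hcard⟩ := ih fun B' hB' => hM B' (by simp [hB'])
    obtain ⟨x, hx, y, ⟨w, hw, hl⟩, hxy⟩ := hM B (by simp)
    set W : Set V := {z | z ∈ w.support}
    have hW : W.ncard ≤ d + 1 := by
      rw [show W = ↑w.support.toFinset by ext; simp [W], Set.ncard_coe_finset]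
      exact w.support.toFinset_card_le.trans (by simpa using hl)
    have hB₀W : 0 < (B₀ ∩ W).ncard := (Set.ncard_pos).2 ⟨v, hvB₀, w.start_mem_support⟩
    refine ⟨B₀ ∪ W, Set.union_subset hB₀A hw, Or.inl hvB₀, ?_, ?_, ?_⟩
    · rintro z (hz | hz)
      · exact ballIn_mono Set.subset_union_left le_rfl (hB₀ hz)
      · exact mem_ballIn_of_mem_support w (fun z hz => Or.inr hz) hl hz
    · simp only [Finset.mem_insert, forall_eq_or_imp]
      refine ⟨⟨x, hx, y, Or.inr w.end_mem_support, hxy⟩, fun B' hB' => ?_⟩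
      obtain ⟨x', hx', y', hy', h⟩ := hadj B' hB'
      exact ⟨x', hx', y', Or.inl hy', h⟩
    · have := Set.ncard_union_add_ncard_inter B₀ W
      rw [Finset.card_insert_of_notMem hB, add_one_mul]
      omega

lemma ncard_ballIn_succ [Finite V] :
    (G.ballIn A v (r + 1)).ncard = (G.ballIn A v r).ncard + (G.layerIn A v r).ncard := by
  rw [layerIn, ← Set.ncard_sdiff_add_ncard_of_subset (ballIn_mono le_rfl r.le_succ), add_comm]

lemma exists_thin_layerIn [Finite V] (hv : v ∈ K) (hK : ¬K ⊆ G.ballIn K v d)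
    (hd : K.ncard ^ 2 * ℓ ^ d < (ℓ + 1) ^ d) :
    ∃ r < d, ℓ * (G.layerIn K v r).ncard ≤ (G.ballIn K v r).ncard ∧
      ℓ * (G.layerIn K v r).ncard ≤ (K \ G.ballIn K v (r + 1)).ncard := by
  by_contra! h
  have hb r : 0 < (G.ballIn K v r).ncard := (Set.ncard_pos).2 ⟨v, mem_ballIn_self hv⟩
  have hbK r : (G.ballIn K v r).ncard ≤ K.ncard := Set.ncard_le_ncard ballIn_subset
  have hc r : (K \ G.ballIn K v r).ncard = K.ncard - (G.ballIn K v r).ncard :=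
    Set.ncard_sdiff ballIn_subset
  have hcL r : (K \ G.ballIn K v r).ncard =
      (K \ G.ballIn K v (r + 1)).ncard + (G.layerIn K v r).ncard := by
    have := ncard_ballIn_succ (G := G) (A := K) (v := v) (r := r)
    have := hbK (r + 1)
    rw [hc, hc]
    omega
  have key := pow_mul_mul_le_of_forall_lt_mul hb (fun _ => ncard_ballIn_succ) hcL
    (fun r hr => (lt_or_ge _ _).imp_right (h r hr))
  have hcd : 0 < (K \ G.ballIn K v d).ncard := (Set.ncard_pos).2 (Set.sdiff_nonempty.2 hK)
  have : (ℓ + 1) ^ d ≤ K.ncard ^ 2 * ℓ ^ d :=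
    calc (ℓ + 1) ^ d ≤ (ℓ + 1) ^ d * (G.ballIn K v 0).ncard * (K \ G.ballIn K v d).ncard :=
          (Nat.le_mul_of_pos_right _ (hb 0)).trans (Nat.le_mul_of_pos_right _ hcd)
      _ ≤ ℓ ^ d * (G.ballIn K v d).ncard * (K \ G.ballIn K v 0).ncard := key
      _ ≤ ℓ ^ d * K.ncard * K.ncard :=
          Nat.mul_le_mul (Nat.mul_le_mul_left _ (hbK d)) (Set.ncard_le_ncard Set.sdiff_subset)
      _ = K.ncard ^ 2 * ℓ ^ d := by ring
  omega

lemma compIn_sdiff_layerIn_subset (hK : G.AdjClosedIn R K) (hx : x ∈ K)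
    (hxL : x ∉ G.layerIn K v r) :
    G.compIn (R \ G.layerIn K v r) x ⊆ G.ballIn K v r ∨
      G.compIn (R \ G.layerIn K v r) x ⊆ K \ G.ballIn K v (r + 1) := by
  by_cases hxr : x ∈ G.ballIn K v r
  · refine .inl (compIn_subset_of_adjClosedIn (fun y hy z hz hyz => ?_) hxr)
    by_contra hzr
    exact hz.2 ⟨mem_ballIn_succ_of_adj hy (hK y (ballIn_subset hy) z hz.1 hyz) hyz, hzr⟩
  · refine .inr (compIn_subset_of_adjClosedIn (fun y hy z hz hyz => ?_) ⟨hx, fun h => hxL ⟨h, hxr⟩⟩)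
    refine ⟨hK y hy.1 z hz.1 hyz, fun hz' => hy.2 ?_⟩
    have hzr : z ∈ G.ballIn K v r := by_contra fun h => hz.2 ⟨hz', h⟩
    exact mem_ballIn_succ_of_adj hzr hy.1 hyz.symm

lemma isBalancedSeparator_of_forall_compIn [Finite V] {C : Set V}
    (h : ∀ x ∈ Cᶜ, 3 * (G.compIn Cᶜ x).ncard ≤ 2 * Nat.card V) : IsBalancedSeparator G C := by
  intro K
  obtain ⟨u, rfl⟩ := K.exists_rep
  refine le_trans (Nat.mul_le_mul_left 3 ?_) (h u u.2)
  rw [← Set.ncard_image_of_injective _ Subtype.val_injective]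
  refine Set.ncard_le_ncard ?_
  rintro _ ⟨w, hw, rfl⟩
  exact mem_compIn_of_reachable (ConnectedComponent.exact hw).symm

end SimpleGraph

theorem CliqueModel.le_card {V : Type*} [Finite V] {G : SimpleGraph V} {m d : ℕ}
    (M : CliqueModel G m d) : m ≤ Nat.card V := by
  choose f hf using fun i => Set.nonempty_coe_sort.1 (M.conn i).nonempty
  have hinj : Function.Injective f := fun i j hij =>
    by_contra fun hne => Set.disjoint_left.1 (M.disj i j hne) (hf i) (hij ▸ hf j)
  simpa using Nat.card_le_card_of_injective f hinj

theorem CliqueModel.le_omegaDepth {V : Type*} [Finite V] {G : SimpleGraph V} {m d : ℕ}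
    (M : CliqueModel G m d) : m ≤ omegaDepth G d :=
  le_csSup ⟨Nat.card V, fun _ ⟨M⟩ => M.le_card⟩ ⟨M⟩

structure IsCliqueModelFamily {V : Type*} (G : SimpleGraph V) (d : ℕ) (M : Finset (Set V)) :
    Prop where
  pairwise_disjoint : (M : Set (Set V)).Pairwise Disjoint
  pairwise_adj : (M : Set (Set V)).Pairwise fun B B' => ∃ x ∈ B, ∃ y ∈ B', G.Adj x y
  exists_center : ∀ B ∈ M, ∃ v ∈ B, B ⊆ G.ballIn B v d

namespace IsCliqueModelFamily

variable {V : Type*} {G : SimpleGraph V} {d : ℕ} {M M' : Finset (Set V)} {B₀ : Set V} {v : V}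

theorem mono (hM : IsCliqueModelFamily G d M) (h : M' ⊆ M) : IsCliqueModelFamily G d M' where
  pairwise_disjoint := hM.pairwise_disjoint.mono (Finset.coe_subset.2 h)
  pairwise_adj := hM.pairwise_adj.mono (Finset.coe_subset.2 h)
  exists_center B hB := hM.exists_center B (h hB)

theorem insert (hM : IsCliqueModelFamily G d M) (hv : v ∈ B₀) (hB₀ : B₀ ⊆ G.ballIn B₀ v d)
    (hdisj : ∀ B ∈ M, Disjoint B₀ B) (hadj : ∀ B ∈ M, ∃ x ∈ B, ∃ y ∈ B₀, G.Adj x y) :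
    IsCliqueModelFamily G d (insert B₀ M) where
  pairwise_disjoint := by
    rw [Finset.coe_insert]
    exact hM.pairwise_disjoint.insert fun B hB _ => ⟨hdisj B hB, (hdisj B hB).symm⟩
  pairwise_adj := by
    rw [Finset.coe_insert]
    refine hM.pairwise_adj.insert fun B hB _ => ?_
    obtain ⟨x, hx, y, hy, h⟩ := hadj B hB
    exact ⟨⟨y, hy, x, hx, h.symm⟩, ⟨x, hx, y, hy, h⟩⟩
  exists_center := by
    simp only [Finset.mem_insert, forall_eq_or_imp]
    exact ⟨⟨v, hv, hB₀⟩, hM.exists_center⟩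

noncomputable def toCliqueModel (hM : IsCliqueModelFamily G d M) : CliqueModel G M.card d where
  B i := M.equivFin.symm i
  disj i j hij := hM.pairwise_disjoint (M.equivFin.symm i).2 (M.equivFin.symm j).2
    (Subtype.val_injective.ne (M.equivFin.symm.injective.ne hij))
  conn i :=
    have ⟨_, hv, hB⟩ := hM.exists_center _ (M.equivFin.symm i).2
    SimpleGraph.induce_connected_of_subset_ballIn hv hB
  rad i :=
    have ⟨_, hv, hB⟩ := hM.exists_center _ (M.equivFin.symm i).2
    ⟨⟨_, hv⟩, fun u => SimpleGraph.induce_dist_le_of_mem_ballIn hv u (hB u.2)⟩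
  adj i j hij := hM.pairwise_adj (M.equivFin.symm i).2 (M.equivFin.symm j).2
    (Subtype.val_injective.ne (M.equivFin.symm.injective.ne hij.ne))

theorem card_le_omegaDepth [Finite V] (hM : IsCliqueModelFamily G d M) :
    M.card ≤ omegaDepth G d :=
  hM.toCliqueModel.le_omegaDepth

end IsCliqueModelFamily

namespace SimpleGraph

variable {V : Type*} (G : SimpleGraph V)

def LargeCompsLE (R : Set V) (k : ℕ) : Prop :=
  ∀ x ∈ R, 2 * Nat.card V < 3 * (G.compIn R x).ncard → (G.compIn R x).ncard ≤ k

variable {G} {S R : Set V} {M : Finset (Set V)} {v : V} {d ℓ : ℕ}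

lemma exists_cut_of_not_subset_ballIn [Finite V] (hv : v ∈ R)
    (hK : ¬G.compIn R v ⊆ G.ballIn (G.compIn R v) v d)
    (hd : Nat.card V ^ 2 * ℓ ^ d < (ℓ + 1) ^ d)
    (hlarge : 2 * Nat.card V < 3 * (G.compIn R v).ncard) :
    ∃ L ⊆ R, L.Nonempty ∧ ℓ * L.ncard ≤ (G.compIn R v).ncard ∧
      G.LargeCompsLE (R \ L) ((G.compIn R v).ncard - ℓ * L.ncard) := by
  set K := G.compIn R v
  have hvK : v ∈ K := mem_compIn_self hv
  have hKcl : G.AdjClosedIn R K := adjClosedIn_compIn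
  obtain ⟨r, hr, hLb, hLc⟩ := exists_thin_layerIn hvK hK
    (lt_of_le_of_lt (by gcongr; exact Set.ncard_le_card K) hd)
  have hL : (G.layerIn K v r).Nonempty := by
    rw [Set.nonempty_iff_ne_empty]
    exact fun hL => hK ((compIn_subset_ballIn_of_layerIn_eq_empty hvK hKcl hL).trans
      (ballIn_mono le_rfl hr.le))
  have hbL := ncard_ballIn_succ (G := G) (A := K) (v := v) (r := r)
  have hc : (K \ G.ballIn K v (r + 1)).ncard = K.ncard - (G.ballIn K v (r + 1)).ncard :=
    Set.ncard_sdiff ballIn_subset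
  have hbK : (G.ballIn K v (r + 1)).ncard ≤ K.ncard := Set.ncard_le_ncard ballIn_subset
  refine ⟨_, fun y hy => compIn_subset (ballIn_subset hy.1), hL, by omega, fun x hx hxl => ?_⟩
  have hxK : x ∈ K :=
    compIn_subset_of_card_lt hKcl Set.sdiff_subset (by omega) (mem_compIn_self hx)
  rcases compIn_sdiff_layerIn_subset hKcl hxK hx.2 with h | h <;>
    · have := Set.ncard_le_ncard h
      omega

lemma exists_extension_of_subset_ballIn [Finite V] (hd : 0 < d)
    (hM : IsCliqueModelFamily G d M)
    (hMcard : ∀ B ∈ M, B.ncard ≤ d * omegaDepth G d) (hv : v ∈ (S ∪ ⋃₀ ↑M)ᶜ)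
    (hK : G.compIn (S ∪ ⋃₀ ↑M)ᶜ v ⊆ G.ballIn (G.compIn (S ∪ ⋃₀ ↑M)ᶜ v) v d)
    (hlarge : 2 * Nat.card V < 3 * (G.compIn (S ∪ ⋃₀ ↑M)ᶜ v).ncard) :
    ∃ M' : Finset (Set V), IsCliqueModelFamily G d M' ∧
      (∀ B ∈ M', B.ncard ≤ d * omegaDepth G d) ∧
      G.LargeCompsLE (S ∪ ⋃₀ ↑M')ᶜ ((G.compIn (S ∪ ⋃₀ ↑M)ᶜ v).ncard - 1) := by
  set R := (S ∪ ⋃₀ (M : Set (Set V)))ᶜ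
  set K := G.compIn R v
  set M₁ := M.filter fun B => ∃ x ∈ B, ∃ y ∈ K, G.Adj x y
  obtain ⟨B₀, hB₀K, hvB₀, hB₀, hadj, hB₀card⟩ :=
    exists_centered_subset_adj (mem_compIn_self hv) M₁ fun B hB => by
      obtain ⟨x, hx, y, hy, hxy⟩ := (Finset.mem_filter.1 hB).2
      exact ⟨x, hx, y, hK hy, hxy⟩
  have hdisj : ∀ B ∈ M, Disjoint B₀ B := fun B hB => Set.disjoint_left.2 fun x hx hxB =>
    compIn_subset (hB₀K hx) (Or.inr ⟨B, hB, hxB⟩)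
  have hM' := (hM.mono (Finset.filter_subset _ _)).insert hvB₀ hB₀
    (fun B hB => hdisj B (Finset.mem_of_mem_filter B hB)) hadj
  have hω := hM'.card_le_omegaDepth
  rw [Finset.card_insert_of_notMem fun h => Set.disjoint_left.1
    (hdisj B₀ (Finset.mem_of_mem_filter B₀ h)) hvB₀ hvB₀] at hω
  refine ⟨insert B₀ M₁, hM', ?_, fun x hx hxl => ?_⟩
  · simp only [Finset.mem_insert, forall_eq_or_imp]
    refine ⟨?_, fun B hB => hMcard B (Finset.mem_of_mem_filter B hB)⟩
    calc B₀.ncard ≤ M₁.card * d + 1 := hB₀card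
      _ ≤ M₁.card * d + d := by omega
      _ = (M₁.card + 1) * d := by ring
      _ ≤ d * omegaDepth G d := by rw [mul_comm]; exact Nat.mul_le_mul_left d hω
  have hKcl : G.AdjClosedIn (R ∪ {z | ∀ y ∈ K, ¬G.Adj y z}) K := by
    rintro y hy z (hz | hz) hyz
    exacts [adjClosedIn_compIn y hy z hz hyz, absurd hyz (hz y hy)]
  have hsub : (S ∪ ⋃₀ ↑(insert B₀ M₁))ᶜ ⊆ R ∪ {z | ∀ y ∈ K, ¬G.Adj y z} := by
    intro z hz
    simp only [Finset.coe_insert, Set.sUnion_insert, Set.mem_compl_iff, Set.mem_union,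
      Set.mem_sUnion, Finset.mem_coe, not_or, not_exists, not_and] at hz
    refine or_iff_not_imp_left.2 fun hzR y hy hyz => ?_
    obtain ⟨B, hB, hzB⟩ : ∃ B ∈ M, z ∈ B := by simpa [R, hz.1] using hzR
    exact hz.2.2 B (Finset.mem_filter.2 ⟨hB, z, hzB, y, hy, hyz.symm⟩) hzB
  have hC := compIn_subset_of_card_lt (x := x) hKcl hsub (by omega)
  have hvC : v ∉ G.compIn (S ∪ ⋃₀ ↑(insert B₀ M₁))ᶜ x := fun h =>
    compIn_subset h (Or.inr ⟨B₀, by simp, hvB₀⟩)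
  have := Set.ncard_lt_ncard (hC.ssubset_of_not_subset fun h => hvC (h (mem_compIn_self hv)))
  omega

theorem exists_isBalancedSeparator_of_largeCompsLE [Finite V] (hℓ : 0 < ℓ)
    (hd : Nat.card V ^ 2 * ℓ ^ d < (ℓ + 1) ^ d) (k : ℕ) (S : Set V) (M : Finset (Set V))
    (hM : IsCliqueModelFamily G d M) (hMcard : ∀ B ∈ M, B.ncard ≤ d * omegaDepth G d)
    (hR : G.LargeCompsLE (S ∪ ⋃₀ ↑M)ᶜ k) (hk : ℓ * S.ncard + k ≤ Nat.card V) :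
    ∃ C : Set V, IsBalancedSeparator G C ∧
      ℓ * C.ncard ≤ Nat.card V + ℓ * (d * omegaDepth G d ^ 2) := by
  induction k using Nat.strong_induction_on generalizing S M with
  | _ k IH =>
  by_cases hsmall : ∀ x ∈ (S ∪ ⋃₀ ↑M)ᶜ, 3 * (G.compIn (S ∪ ⋃₀ ↑M)ᶜ x).ncard ≤ 2 * Nat.card V
  · refine ⟨_, isBalancedSeparator_of_forall_compIn hsmall, ?_⟩
    have hC : (S ∪ ⋃₀ ↑M).ncard ≤ S.ncard + omegaDepth G d * (d * omegaDepth G d) :=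
      (Set.ncard_union_le _ _).trans <| Nat.add_le_add_left
        ((ncard_sUnion_le_card_mul hMcard).trans (Nat.mul_le_mul_right _ hM.card_le_omegaDepth)) _
    calc ℓ * (S ∪ ⋃₀ ↑M).ncard ≤ ℓ * (S.ncard + omegaDepth G d * (d * omegaDepth G d)) :=
          Nat.mul_le_mul_left ℓ hC
      _ = ℓ * S.ncard + ℓ * (d * omegaDepth G d ^ 2) := by ring
      _ ≤ Nat.card V + ℓ * (d * omegaDepth G d ^ 2) := by omega
  push Not at hsmall
  obtain ⟨v, hv, hlarge⟩ := hsmall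
  have hKk := hR v hv hlarge
  have hK0 : 0 < (G.compIn (S ∪ ⋃₀ ↑M)ᶜ v).ncard := (Set.ncard_pos).2 ⟨v, mem_compIn_self hv⟩
  by_cases hK : G.compIn (S ∪ ⋃₀ ↑M)ᶜ v ⊆ G.ballIn (G.compIn (S ∪ ⋃₀ ↑M)ᶜ v) v d
  · have hd0 : 0 < d := by
      refine Nat.pos_of_ne_zero fun hd0 => ?_
      rw [hd0, pow_zero, pow_zero, mul_one] at hd
      have := Set.ncard_le_card (G.compIn (S ∪ ⋃₀ ↑M)ᶜ v)
      nlinarith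
    obtain ⟨M', hM', hM'card, hR'⟩ := exists_extension_of_subset_ballIn hd0 hM hMcard hv hK hlarge
    exact IH _ (by omega) S M' hM' hM'card hR' (by omega)
  · obtain ⟨L, -, hL, hLK, hR'⟩ := exists_cut_of_not_subset_ballIn hv hK hd hlarge
    have hSL : (S ∪ L ∪ ⋃₀ ↑M)ᶜ = (S ∪ ⋃₀ ↑M)ᶜ \ L := by
      ext; simp only [Set.mem_compl_iff, Set.mem_union, Set.mem_sdiff]; tauto
    have hL0 : 0 < ℓ * L.ncard := Nat.mul_pos hℓ ((Set.ncard_pos).2 hL)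
    have hSLcard : ℓ * (S ∪ L).ncard ≤ ℓ * S.ncard + ℓ * L.ncard := by
      rw [← mul_add]; exact Nat.mul_le_mul_left ℓ (Set.ncard_union_le S L)
    exact IH _ (by omega) (S ∪ L) M hM hMcard (hSL ▸ hR') (by omega)

theorem exists_isBalancedSeparator [Finite V] (G : SimpleGraph V) (hℓ : 0 < ℓ)
    (hd : Nat.card V ^ 2 * ℓ ^ d < (ℓ + 1) ^ d) :
    ∃ C : Set V, IsBalancedSeparator G C ∧
      ℓ * C.ncard ≤ Nat.card V + ℓ * (d * omegaDepth G d ^ 2) :=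
  exists_isBalancedSeparator_of_largeCompsLE hℓ hd _ ∅ ∅ ⟨by simp, by simp, by simp⟩ (by simp)
    (fun _ _ _ => Set.ncard_le_card _) (by simp)

end SimpleGraph

lemma two_mul_pow_self_le_succ_pow {ℓ : ℕ} (hℓ : 0 < ℓ) : 2 * ℓ ^ ℓ ≤ (ℓ + 1) ^ ℓ := by
  have hℓ' : (0 : ℚ) < ℓ := by exact_mod_cast hℓ
  have h := one_add_mul_le_pow (show (-2 : ℚ) ≤ (ℓ : ℚ)⁻¹ by linarith [inv_pos.2 hℓ']) ℓ
  rw [mul_inv_cancel₀ hℓ'.ne'] at h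
  have key : (2 * ℓ ^ ℓ : ℚ) ≤ (ℓ + 1) ^ ℓ :=
    calc (2 * ℓ ^ ℓ : ℚ) = (1 + 1) * ℓ ^ ℓ := by norm_num
      _ ≤ (1 + (ℓ : ℚ)⁻¹) ^ ℓ * ℓ ^ ℓ := by gcongr
      _ = (ℓ + 1) ^ ℓ := by rw [← mul_pow]; field_simp
  exact_mod_cast key

def separatorDepth (ℓ n : ℕ) : ℕ := 2 * ℓ * Nat.clog 2 (n + 1)

lemma separatorDepth_mono {ℓ ℓ' n n' : ℕ} (hℓ : ℓ ≤ ℓ') (hn : n ≤ n') :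
    separatorDepth ℓ n ≤ separatorDepth ℓ' n' :=
  Nat.mul_le_mul (Nat.mul_le_mul_left 2 hℓ) (Nat.clog_mono_right 2 (by omega))

lemma clog_two_le_two_mul_logb {n : ℕ} (hn : 1 ≤ n) :
    (Nat.clog 2 (n + 1) : ℝ) ≤ 2 * Real.logb 2 (n + 1) := by
  have h1 : 1 ≤ Real.logb 2 (n + 1) := by
    rw [Real.le_logb_iff_rpow_le (by norm_num) (by positivity)]
    norm_num
    linarith [show (1 : ℝ) ≤ n by exact_mod_cast hn]
  have h2 := Nat.ceil_lt_add_one (zero_le_one.trans h1)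
  rw [← Real.natCeil_logb_natCast]
  push_cast at h2 ⊢
  linarith

lemma separatorDepth_le {ℓ n : ℕ} (hn : 1 ≤ n) :
    (separatorDepth ℓ n : ℝ) ≤ 4 * ℓ * Real.logb 2 (n + 1) := by
  have := mul_le_mul_of_nonneg_left (clog_two_le_two_mul_logb hn)
    (by positivity : (0 : ℝ) ≤ 2 * ℓ)
  rw [separatorDepth]
  push_cast
  linarith

lemma sq_mul_pow_separatorDepth_lt (n : ℕ) {ℓ : ℕ} (hℓ : 0 < ℓ) :
    n ^ 2 * ℓ ^ separatorDepth ℓ n < (ℓ + 1) ^ separatorDepth ℓ n := by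
  rw [separatorDepth]
  set T := Nat.clog 2 (n + 1)
  have hT : n + 1 ≤ 2 ^ T := Nat.le_pow_clog one_lt_two _
  calc n ^ 2 * ℓ ^ (2 * ℓ * T) < (n + 1) ^ 2 * ℓ ^ (2 * ℓ * T) := by gcongr; omega
    _ ≤ (2 ^ T) ^ 2 * ℓ ^ (2 * ℓ * T) := by gcongr
    _ = (2 * ℓ ^ ℓ) ^ (2 * T) := by ring
    _ ≤ ((ℓ + 1) ^ ℓ) ^ (2 * T) := by gcongr; exact two_mul_pow_self_le_succ_pow hℓ
    _ = (ℓ + 1) ^ (2 * ℓ * T) := by ring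

/-- every `n`-vertex graph has a balanced separator of order at most
`n/ℓ + d(ℓ,n)·ω_{d(ℓ,n)}(G)²`. -/
theorem stmt1 :
    ∃ (a : ℝ) (d : ℕ → ℕ → ℕ), 0 < a ∧
      (∀ ℓ ℓ' n n' : ℕ, ℓ ≤ ℓ' → n ≤ n' → d ℓ n ≤ d ℓ' n') ∧
      (∀ ℓ n : ℕ, 1 ≤ ℓ → 1 ≤ n → (d ℓ n : ℝ) ≤ a * ℓ * Real.logb 2 (n + 1)) ∧
      (∀ (V : Type) [Fintype V] (G : SimpleGraph V) (n ℓ : ℕ),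
        Fintype.card V = n → 1 ≤ ℓ →
        ∃ C : Finset V, IsBalancedSeparator G ↑C ∧
          (C.card : ℝ) ≤ (n : ℝ) / ℓ +
            (d ℓ n : ℝ) * (omegaDepth G (d ℓ n) : ℝ) ^ 2) := by
  refine ⟨4, separatorDepth, by norm_num, fun _ _ _ _ => separatorDepth_mono,
    fun _ _ _ => separatorDepth_le, fun V _ G n ℓ hn hℓ => ?_⟩
  rw [← Nat.card_eq_fintype_card] at hn
  subst hn
  obtain ⟨C, hC, hCcard⟩ :=
    SimpleGraph.exists_isBalancedSeparator G hℓ (sq_mul_pow_separatorDepth_lt _ hℓ)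
  refine ⟨C.toFinset, by simpa using hC, ?_⟩
  have hℓ' : (0 : ℝ) < ℓ := by exact_mod_cast hℓ
  have hCcard' := (Nat.cast_le (α := ℝ)).2 hCcard
  push_cast at hCcard'
  rw [← Set.ncard_eq_toFinset_card', div_add' _ _ _ hℓ'.ne', le_div_iff₀ hℓ']
  linarith
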